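/- arXiv:math/0305389 — 2 statements merged into one kernel-verified Lean document; each statement's English description precedes it below -/
import Mathlib

section
/- For the powers of the Poisson kernel on the unit disc, the normalizing integral satisfies the asymptotics: for l > 0 there exist constants c1, c2 > 0 such that for all z with |z| < 1, c1 (1-|z|)^{1/2 - l} ≤ ∫_{-π}^{π} (p(z,θ))^{l+1/2} dθ ≤ c2 (1-|z|)^{1/2 - l}, where p(z,θ) = (1/2π)(1-|z|²)/|z - e^{iθ}|². -/
/-!
Put `r = ‖z‖` and `δ = 1 - r`. Since the Poisson kernel at `z` is the one at `r` rotated by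
`arg z`, periodicity reduces the integral to `z = r`. There, `2θ²/π² ≤ 1 - cos θ ≤ θ²/2` on
`[-π, π]` makes the kernel comparable, up to the factors `2π` and `(2π)⁻¹`, to the Cauchy kernel
`δ / (δ² + θ²)`. The substitution `θ = δ u` turns the integral of the `s`-th power of the latter
over `[-π, π]` into `δ ^ (1 - s) * ∫ u in -π/δ..π/δ, (1 + u²) ^ (-s)`, and this last integral lies
between its value over `[-π, π]` and its value over `ℝ`, which is finite because `s = l + 1/2 > 1/2`.
-/

open Real Complex MeasureTheory

/-- Poisson kernel on the unit disc. -/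
noncomputable def poissonKer (z : ℂ) (θ : ℝ) : ℝ :=
  (1 / (2 * Real.pi)) * (1 - ‖z‖ ^ 2) / ‖z - Complex.exp (θ * Complex.I)‖ ^ 2

noncomputable def poissonDenom (r θ : ℝ) : ℝ := 1 - 2 * r * Real.cos θ + r ^ 2

noncomputable def radialPoissonKer (r θ : ℝ) : ℝ :=
  1 / (2 * π) * (1 - r ^ 2) / poissonDenom r θ

noncomputable def cauchyKer (δ θ : ℝ) : ℝ := δ / (δ ^ 2 + θ ^ 2)

lemma norm_sub_exp_mul_I_sq (z : ℂ) (θ : ℝ) :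
    ‖z - exp (θ * I)‖ ^ 2 = poissonDenom ‖z‖ (θ - arg z) := by
  have hre := norm_mul_cos_arg z
  have him := norm_mul_sin_arg z
  have hz : ‖z‖ ^ 2 = z.re ^ 2 + z.im ^ 2 := by rw [Complex.sq_norm, normSq_apply]; ring
  rw [poissonDenom, Complex.sq_norm, normSq_apply, Real.cos_sub, hz]
  simp only [sub_re, sub_im, exp_ofReal_mul_I_re, exp_ofReal_mul_I_im]
  linear_combination Real.sin_sq_add_cos_sq θ + 2 * Real.cos θ * hre + 2 * Real.sin θ * him

lemma poissonKer_eq_radialPoissonKer (z : ℂ) (θ : ℝ) :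
    poissonKer z θ = radialPoissonKer ‖z‖ (θ - arg z) := by
  rw [poissonKer, radialPoissonKer, norm_sub_exp_mul_I_sq]

lemma integral_poissonKer_rpow_eq (z : ℂ) (s : ℝ) :
    ∫ θ in (-π)..π, poissonKer z θ ^ s = ∫ θ in (-π)..π, radialPoissonKer ‖z‖ θ ^ s := by
  have hper : Function.Periodic (fun θ ↦ radialPoissonKer ‖z‖ θ ^ s) (2 * π) := fun θ ↦ by
    simp only [radialPoissonKer, poissonDenom, Real.cos_add_two_pi]
  simp only [poissonKer_eq_radialPoissonKer]
  rw [intervalIntegral.integral_comp_sub_right (fun θ ↦ radialPoissonKer ‖z‖ θ ^ s)]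
  convert hper.intervalIntegral_add_eq (-π - arg z) (-π) using 2 <;> ring

section PoissonDenom

variable {r : ℝ}

lemma sq_one_sub_le_poissonDenom (hr₀ : 0 ≤ r) (θ : ℝ) : (1 - r) ^ 2 ≤ poissonDenom r θ := by
  rw [poissonDenom]
  nlinarith [Real.cos_le_one θ]

lemma poissonDenom_pos (hr₀ : 0 ≤ r) (hr₁ : r < 1) (θ : ℝ) : 0 < poissonDenom r θ :=
  (pow_pos (sub_pos.2 hr₁) 2).trans_le (sq_one_sub_le_poissonDenom hr₀ θ)

lemma poissonDenom_le_sq_one_sub_add_sq (hr₀ : 0 ≤ r) (hr₁ : r ≤ 1) (θ : ℝ) :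
    poissonDenom r θ ≤ (1 - r) ^ 2 + θ ^ 2 := by
  rw [poissonDenom]
  nlinarith [one_sub_sq_div_two_le_cos (x := θ), sq_nonneg θ]

lemma one_sub_cos_le_two_mul_poissonDenom (hr₀ : 0 ≤ r) (θ : ℝ) :
    1 - Real.cos θ ≤ 2 * poissonDenom r θ := by
  rw [poissonDenom]
  rcases le_or_gt 0 (Real.cos θ) with hc | hc
  · nlinarith [Real.cos_le_one θ, sq_nonneg (r - Real.cos θ)]
  · nlinarith [Real.neg_one_le_cos θ, mul_nonneg hr₀ (neg_nonneg.2 hc.le)]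

end PoissonDenom

section Comparison

variable {r : ℝ}

lemma radialPoissonKer_eq_div (θ : ℝ) :
    radialPoissonKer r θ = (1 - r ^ 2) / (2 * π * poissonDenom r θ) := by
  rw [radialPoissonKer, one_div_mul_eq_div, div_div]

lemma continuous_radialPoissonKer (hr₀ : 0 ≤ r) (hr₁ : r < 1) :
    Continuous (radialPoissonKer r) :=
  continuous_const.div (by unfold poissonDenom; fun_prop)
    fun θ ↦ (poissonDenom_pos hr₀ hr₁ θ).ne'

lemma radialPoissonKer_nonneg (hr₀ : 0 ≤ r) (hr₁ : r < 1) (θ : ℝ) :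
    0 ≤ radialPoissonKer r θ := by
  have := poissonDenom_pos hr₀ hr₁ θ
  rw [radialPoissonKer_eq_div]
  exact div_nonneg (by nlinarith) (by positivity)

lemma continuous_cauchyKer {δ : ℝ} (hδ : 0 < δ) : Continuous (cauchyKer δ) :=
  continuous_const.div (by fun_prop) fun θ ↦ by positivity

lemma cauchyKer_nonneg {δ : ℝ} (hδ : 0 ≤ δ) (θ : ℝ) : 0 ≤ cauchyKer δ θ := by
  rw [cauchyKer]
  positivity

lemma cauchyKer_div_two_pi_le_radialPoissonKer (hr₀ : 0 ≤ r) (hr₁ : r < 1) (θ : ℝ) :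
    cauchyKer (1 - r) θ / (2 * π) ≤ radialPoissonKer r θ := by
  have hD := poissonDenom_pos hr₀ hr₁ θ
  have hD_le := poissonDenom_le_sq_one_sub_add_sq hr₀ hr₁.le θ
  rw [cauchyKer, radialPoissonKer_eq_div, div_div, mul_comm _ (2 * π)]
  exact div_le_div₀ (by nlinarith) (by nlinarith) (by positivity) (by gcongr)

lemma radialPoissonKer_le_two_pi_mul_cauchyKer {θ : ℝ} (hr₀ : 0 ≤ r) (hr₁ : r < 1)
    (hθ : |θ| ≤ π) : radialPoissonKer r θ ≤ 2 * π * cauchyKer (1 - r) θ := by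
  have hD := poissonDenom_pos hr₀ hr₁ θ
  have hπ : 1 ≤ π ^ 2 := by nlinarith [pi_gt_three]
  have hθ_sq : θ ^ 2 ≤ π ^ 2 * poissonDenom r θ := calc
    θ ^ 2 = π ^ 2 / 2 * (2 / π ^ 2 * θ ^ 2) := by field_simp
    _ ≤ π ^ 2 / 2 * (2 * poissonDenom r θ) := mul_le_mul_of_nonneg_left
      (by linarith [cos_le_one_sub_mul_cos_sq hθ, one_sub_cos_le_two_mul_poissonDenom hr₀ θ])
      (by positivity)
    _ = π ^ 2 * poissonDenom r θ := by ring
  have h_key : ((1 - r) ^ 2 + θ ^ 2) / (2 * π ^ 2) ≤ poissonDenom r θ := by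
    rw [div_le_iff₀ (by positivity)]
    nlinarith [sq_one_sub_le_poissonDenom hr₀ θ]
  calc radialPoissonKer r θ ≤ 2 * (1 - r) / (2 * π * (((1 - r) ^ 2 + θ ^ 2) / (2 * π ^ 2))) := by
        rw [radialPoissonKer_eq_div]
        exact div_le_div₀ (by linarith) (by nlinarith) (by positivity) (by gcongr)
    _ = 2 * π * cauchyKer (1 - r) θ := by
        rw [cauchyKer]
        field_simp

lemma integral_radialPoissonKer_rpow_ge {s : ℝ} (hr₀ : 0 ≤ r) (hr₁ : r < 1) (hs : 0 ≤ s) :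
    (2 * π)⁻¹ ^ s * ∫ θ in (-π)..π, cauchyKer (1 - r) θ ^ s ≤
      ∫ θ in (-π)..π, radialPoissonKer r θ ^ s := by
  have hδ : 0 < 1 - r := by linarith
  rw [← intervalIntegral.integral_const_mul]
  refine intervalIntegral.integral_mono_on (by linarith [pi_pos]) ?_ ?_ fun θ _ ↦ ?_
  · exact (continuous_const.mul ((continuous_cauchyKer hδ).rpow_const fun _ ↦ Or.inr hs)
      ).intervalIntegrable _ _
  · exact ((continuous_radialPoissonKer hr₀ hr₁).rpow_const fun _ ↦ Or.inr hs
      ).intervalIntegrable _ _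
  · rw [← mul_rpow (by positivity) (cauchyKer_nonneg hδ.le θ), ← div_eq_inv_mul]
    exact rpow_le_rpow (by have := cauchyKer_nonneg hδ.le θ; positivity)
      (cauchyKer_div_two_pi_le_radialPoissonKer hr₀ hr₁ θ) hs

lemma integral_radialPoissonKer_rpow_le {s : ℝ} (hr₀ : 0 ≤ r) (hr₁ : r < 1) (hs : 0 ≤ s) :
    ∫ θ in (-π)..π, radialPoissonKer r θ ^ s ≤
      (2 * π) ^ s * ∫ θ in (-π)..π, cauchyKer (1 - r) θ ^ s := by
  have hδ : 0 < 1 - r := by linarith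
  rw [← intervalIntegral.integral_const_mul]
  refine intervalIntegral.integral_mono_on (by linarith [pi_pos]) ?_ ?_ fun θ hθ ↦ ?_
  · exact ((continuous_radialPoissonKer hr₀ hr₁).rpow_const fun _ ↦ Or.inr hs
      ).intervalIntegrable _ _
  · exact (continuous_const.mul ((continuous_cauchyKer hδ).rpow_const fun _ ↦ Or.inr hs)
      ).intervalIntegrable _ _
  · rw [← mul_rpow (by positivity) (cauchyKer_nonneg hδ.le θ)]
    exact rpow_le_rpow (radialPoissonKer_nonneg hr₀ hr₁ θ)
      (radialPoissonKer_le_two_pi_mul_cauchyKer hr₀ hr₁ (abs_le.2 hθ)) hs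

end Comparison

section OneAddSqRpow

lemma continuous_one_add_sq_rpow_neg (s : ℝ) : Continuous fun u : ℝ ↦ (1 + u ^ 2) ^ (-s) :=
  (by fun_prop : Continuous fun u : ℝ ↦ 1 + u ^ 2).rpow_const fun u ↦ Or.inl (by positivity)

lemma integrable_one_add_sq_rpow_neg {s : ℝ} (hs : 1 / 2 < s) :
    Integrable fun u : ℝ ↦ (1 + u ^ 2) ^ (-s) := by
  have := integrable_rpow_neg_one_add_norm_sq (E := ℝ) (μ := volume) (r := 2 * s)
    (by rw [Module.finrank_self]; push_cast; linarith)
  simpa only [Real.norm_eq_abs, sq_abs, neg_mul, neg_div, mul_div_cancel_left₀ s two_ne_zero]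
    using this

lemma intervalIntegral_one_add_sq_rpow_neg_le_integral {s : ℝ} (hs : 1 / 2 < s) {b : ℝ}
    (hb : 0 ≤ b) : ∫ u in (-b)..b, (1 + u ^ 2) ^ (-s) ≤ ∫ u, (1 + u ^ 2) ^ (-s) := by
  rw [intervalIntegral.integral_of_le (by linarith)]
  exact setIntegral_le_integral (integrable_one_add_sq_rpow_neg hs)
    (Filter.Eventually.of_forall fun u ↦ by positivity)

lemma intervalIntegral_one_add_sq_rpow_neg_mono (s : ℝ) {a b : ℝ} (ha : 0 ≤ a) (hab : a ≤ b) :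
    ∫ u in (-a)..a, (1 + u ^ 2) ^ (-s) ≤ ∫ u in (-b)..b, (1 + u ^ 2) ^ (-s) :=
  intervalIntegral.integral_mono_interval (by linarith) (by linarith) hab
    (Filter.Eventually.of_forall fun u ↦ by positivity)
    ((continuous_one_add_sq_rpow_neg s).intervalIntegrable _ _)

lemma intervalIntegral_one_add_sq_rpow_neg_pos (s : ℝ) {a : ℝ} (ha : 0 < a) :
    0 < ∫ u in (-a)..a, (1 + u ^ 2) ^ (-s) :=
  intervalIntegral.intervalIntegral_pos_of_pos_on
    ((continuous_one_add_sq_rpow_neg s).intervalIntegrable _ _)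
    (fun u _ ↦ by positivity) (by linarith)

end OneAddSqRpow

section CauchyKer

variable {δ : ℝ}

lemma cauchyKer_rpow (hδ : 0 < δ) (θ s : ℝ) :
    cauchyKer δ θ ^ s = δ ^ (-s) * (1 + (θ / δ) ^ 2) ^ (-s) := by
  have h : cauchyKer δ θ = δ⁻¹ * (1 + (θ / δ) ^ 2)⁻¹ := by
    rw [cauchyKer]
    field_simp
  rw [h, mul_rpow (by positivity) (by positivity), inv_rpow hδ.le, inv_rpow (by positivity),
    rpow_neg hδ.le, rpow_neg (by positivity)]

lemma integral_cauchyKer_rpow (hδ : 0 < δ) (a s : ℝ) :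
    ∫ θ in (-a)..a, cauchyKer δ θ ^ s =
      δ ^ (1 - s) * ∫ u in (-(a / δ))..(a / δ), (1 + u ^ 2) ^ (-s) := by
  simp only [cauchyKer_rpow hδ, intervalIntegral.integral_const_mul,
    intervalIntegral.integral_comp_div (fun u ↦ (1 + u ^ 2) ^ (-s)) hδ.ne', smul_eq_mul, neg_div]
  rw [sub_eq_neg_add, rpow_add hδ, rpow_one, mul_assoc]

lemma integral_cauchyKer_rpow_ge (hδ : 0 < δ) (hδ₁ : δ ≤ 1) (s : ℝ) {a : ℝ} (ha : 0 ≤ a) :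
    (∫ u in (-a)..a, (1 + u ^ 2) ^ (-s)) * δ ^ (1 - s) ≤ ∫ θ in (-a)..a, cauchyKer δ θ ^ s := by
  rw [integral_cauchyKer_rpow hδ, mul_comm]
  gcongr
  exact intervalIntegral_one_add_sq_rpow_neg_mono s ha (le_div_self ha hδ hδ₁)

lemma integral_cauchyKer_rpow_le (hδ : 0 < δ) {s : ℝ} (hs : 1 / 2 < s) {a : ℝ} (ha : 0 ≤ a) :
    ∫ θ in (-a)..a, cauchyKer δ θ ^ s ≤ (∫ u, (1 + u ^ 2) ^ (-s)) * δ ^ (1 - s) := by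
  rw [integral_cauchyKer_rpow hδ, mul_comm]
  gcongr
  exact intervalIntegral_one_add_sq_rpow_neg_le_integral hs (by positivity)

end CauchyKer

/-- For `l > 0`, the normalizing integral of the `(l+1/2)`-power of the Poisson kernel
satisfies `P_l 1 (z) ≍ (1-|z|)^(1/2 - l)`. -/
theorem power_poisson_normalization_asymptotics (l : ℝ) (hl : 0 < l) :
    ∃ c₁ c₂ : ℝ, 0 < c₁ ∧ 0 < c₂ ∧ ∀ z : ℂ, ‖z‖ < 1 →
      c₁ * (1 - ‖z‖) ^ ((1 : ℝ) / 2 - l) ≤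
        (∫ θ in (-Real.pi)..Real.pi, (poissonKer z θ) ^ (l + 1 / 2 : ℝ)) ∧
      (∫ θ in (-Real.pi)..Real.pi, (poissonKer z θ) ^ (l + 1 / 2 : ℝ)) ≤
        c₂ * (1 - ‖z‖) ^ ((1 : ℝ) / 2 - l) := by
  set s : ℝ := l + 1 / 2 with hs_def
  have hs : 1 / 2 < s := by linarith [hs_def]
  have hJ := intervalIntegral_one_add_sq_rpow_neg_pos s pi_pos
  have hI := hJ.trans_le (intervalIntegral_one_add_sq_rpow_neg_le_integral hs pi_pos.le)
  refine ⟨(2 * π)⁻¹ ^ s * ∫ u in (-π)..π, (1 + u ^ 2) ^ (-s),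
    (2 * π) ^ s * ∫ u, (1 + u ^ 2) ^ (-s), by positivity, by positivity, fun z hz ↦ ?_⟩
  have hδ : 0 < 1 - ‖z‖ := by linarith
  rw [integral_poissonKer_rpow_eq, show (1 : ℝ) / 2 - l = 1 - s by ring, mul_assoc, mul_assoc]
  constructor
  · calc _ ≤ (2 * π)⁻¹ ^ s * ∫ θ in (-π)..π, cauchyKer (1 - ‖z‖) θ ^ s := by
          gcongr
          exact integral_cauchyKer_rpow_ge hδ (by linarith [norm_nonneg z]) s pi_pos.le
      _ ≤ _ := integral_radialPoissonKer_rpow_ge (norm_nonneg z) hz (by linarith)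
  · calc _ ≤ (2 * π) ^ s * ∫ θ in (-π)..π, cauchyKer (1 - ‖z‖) θ ^ s :=
          integral_radialPoissonKer_rpow_le (norm_nonneg z) hz (by linarith)
      _ ≤ _ := by
          gcongr
          exact integral_cauchyKer_rpow_le hδ hs pi_pos.le
end

section
/- For the square root of the Poisson kernel on the unit disc, there exist constants c1, c2 > 0 such that for all z with 0 < |z| < 1, c1 (1-|z|)^{1/2} log(2/(1-|z|)) ≤ ∫_{-π}^{π} (p(z,θ))^{1/2} dθ ≤ c2 (1-|z|)^{1/2} log(2/(1-|z|)), where p(z,θ) = (1/2π)(1-|z|²)/|z-e^{iθ}|². -/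
open Real Complex MeasureTheory

/-!
Since `p(z, θ) = (1 - |z|²) / (2π |z - e^{iθ}|²)`, the integral of `√p(z, ·)` is
`√((1 - |z|²)/2π) ≍ √(1 - |z|)` times `∫ dθ / |z - e^{iθ}|`. By rotation invariance the
latter only depends on `r = |z|`, and on `[0, π]` the chord length `|r - e^{iu}|` is
comparable to `(1 - r) + u`, whose reciprocal integrates to
`log((π + 1 - r)/(1 - r)) ≍ log(2/(1 - r))`.
-/

noncomputable def circleInvDist (z : ℂ) (θ : ℝ) : ℝ :=
  ‖z - exp (θ * I)‖⁻¹

lemma norm_ofReal_sub_exp_mul_I_sq (r u : ℝ) :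
    ‖(r : ℂ) - exp (u * I)‖ ^ 2 = (1 - r) ^ 2 + 2 * r * (1 - Real.cos u) := by
  rw [Complex.sq_norm, Complex.normSq_apply]
  simp only [sub_re, sub_im, ofReal_re, ofReal_im, exp_ofReal_mul_I_re, exp_ofReal_mul_I_im]
  nlinarith [Real.sin_sq_add_cos_sq u]

lemma one_sub_norm_le_norm_sub_exp_mul_I (z : ℂ) (u : ℝ) :
    1 - ‖z‖ ≤ ‖z - exp (u * I)‖ := by
  have h := norm_sub_norm_le (exp (u * I)) z
  rw [norm_exp_ofReal_mul_I, norm_sub_rev] at h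
  linarith

lemma norm_sub_exp_mul_I_pos {z : ℂ} (hz : ‖z‖ < 1) (u : ℝ) :
    0 < ‖z - exp (u * I)‖ :=
  (sub_pos.mpr hz).trans_le (one_sub_norm_le_norm_sub_exp_mul_I z u)

lemma norm_ofReal_sub_exp_mul_I_le {r u : ℝ} (hr₀ : 0 ≤ r) (hr₁ : r ≤ 1) (hu : 0 ≤ u) :
    ‖(r : ℂ) - exp (u * I)‖ ≤ (1 - r) + u := by
  have hsq := norm_ofReal_sub_exp_mul_I_sq r u
  have hcos : 1 - u ^ 2 / 2 ≤ Real.cos u := one_sub_sq_div_two_le_cos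
  nlinarith [norm_nonneg ((r : ℂ) - exp (u * I))]

lemma le_norm_ofReal_sub_exp_mul_I {r u : ℝ} (hr₀ : 0 ≤ r) (hu₀ : 0 ≤ u) (hu₁ : u ≤ π) :
    ((1 - r) + u) / 9 ≤ ‖(r : ℂ) - exp (u * I)‖ := by
  have hnorm := norm_nonneg ((r : ℂ) - exp (u * I))
  rcases le_or_gt r (1 / 2) with hr | hr
  · have h := one_sub_norm_le_norm_sub_exp_mul_I (r : ℂ) u
    rw [norm_real, Real.norm_of_nonneg hr₀] at h
    linarith [pi_le_four]
  · -- Jordan's inequality `1 - cos u ≥ 2u²/π² ≥ u²/5` on `[0, π]`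
    have hcos : Real.cos u ≤ 1 - 2 / π ^ 2 * u ^ 2 :=
      cos_le_one_sub_mul_cos_sq (by rwa [abs_of_nonneg hu₀])
    have hπ : 1 / 5 ≤ 2 / π ^ 2 := by
      rw [div_le_div_iff₀ (by norm_num) (by positivity)]
      nlinarith [pi_lt_d2, pi_pos]
    have hsq := norm_ofReal_sub_exp_mul_I_sq r u
    nlinarith [mul_le_mul_of_nonneg_right hπ (sq_nonneg u), sq_nonneg ((1 - r) - u),
      sq_nonneg (‖(r : ℂ) - exp (u * I)‖ - ((1 - r) + u) / 9)]

lemma circleInvDist_eq_circleInvDist_norm (z : ℂ) (θ : ℝ) :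
    circleInvDist z θ = circleInvDist ‖z‖ (θ - arg z) := by
  have hrot : (‖z‖ : ℂ) * exp (arg z * I) - exp (θ * I)
      = exp (arg z * I) * ((‖z‖ : ℂ) - exp ((θ - arg z : ℝ) * I)) := by
    rw [mul_sub, ← Complex.exp_add]
    push_cast
    ring_nf
  rw [circleInvDist, circleInvDist]
  conv_lhs => rw [← norm_mul_exp_arg_mul_I z]
  rw [hrot, norm_mul, norm_exp_ofReal_mul_I, one_mul]

lemma circleInvDist_ofReal_neg (r u : ℝ) : circleInvDist r (-u) = circleInvDist r u := by
  have hsq := norm_ofReal_sub_exp_mul_I_sq r (-u)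
  rw [Real.cos_neg, ← norm_ofReal_sub_exp_mul_I_sq r u] at hsq
  rw [circleInvDist, circleInvDist,
    (sq_eq_sq₀ (norm_nonneg _) (norm_nonneg _)).mp hsq]

lemma circleInvDist_periodic (z : ℂ) : Function.Periodic (circleInvDist z) (2 * π) := by
  intro u
  rw [circleInvDist, circleInvDist, ofReal_add, add_mul, Complex.exp_add, ofReal_mul,
    ofReal_ofNat, exp_two_pi_mul_I, mul_one]

lemma continuous_circleInvDist {z : ℂ} (hz : ‖z‖ < 1) : Continuous (circleInvDist z) :=
  Continuous.inv₀ (by fun_prop) fun u => (norm_sub_exp_mul_I_pos hz u).ne'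

lemma integral_circleInvDist_eq_integral_circleInvDist_norm (z : ℂ) :
    ∫ θ in (-π)..π, circleInvDist z θ = ∫ θ in (-π)..π, circleInvDist ‖z‖ θ := by
  simp_rw [circleInvDist_eq_circleInvDist_norm z]
  rw [intervalIntegral.integral_comp_sub_right (fun u => circleInvDist ‖z‖ u)]
  have h := (circleInvDist_periodic (‖z‖ : ℂ)).intervalIntegral_add_eq (-π - arg z) (-π)
  rwa [show -π - arg z + 2 * π = π - arg z by ring, show -π + 2 * π = π by ring] at h

lemma integral_circleInvDist_ofReal_eq_two_mul {r : ℝ} (hr₀ : 0 ≤ r) (hr₁ : r < 1) :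
    ∫ u in (-π)..π, circleInvDist r u = 2 * ∫ u in (0 : ℝ)..π, circleInvDist r u := by
  have hcont := continuous_circleInvDist (z := r)
    (by rwa [norm_real, Real.norm_of_nonneg hr₀])
  have hneg : ∫ u in (-π)..0, circleInvDist r u = ∫ u in (0 : ℝ)..π, circleInvDist r u := by
    have h := intervalIntegral.integral_comp_neg (a := 0) (b := π) (circleInvDist r)
    rw [neg_zero] at h
    simpa only [circleInvDist_ofReal_neg] using h.symm
  rw [← intervalIntegral.integral_add_adjacent_intervals (hcont.intervalIntegrable _ 0)
    (hcont.intervalIntegrable 0 _), hneg, two_mul]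

lemma integral_inv_const_add {δ b : ℝ} (hδ : 0 < δ) (hb : 0 ≤ b) :
    ∫ u in (0 : ℝ)..b, (δ + u)⁻¹ = Real.log ((b + δ) / δ) := by
  simp_rw [add_comm δ]
  rw [intervalIntegral.integral_comp_add_right (fun x => x⁻¹), zero_add,
    integral_inv_of_pos hδ (by positivity)]

lemma intervalIntegrable_inv_const_add {δ b : ℝ} (hδ : 0 < δ) (hb : 0 ≤ b) :
    IntervalIntegrable (fun u => (δ + u)⁻¹) volume 0 b := by
  refine (ContinuousOn.inv₀ (by fun_prop) fun u hu => ?_).intervalIntegrable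
  rw [Set.uIcc_of_le hb] at hu
  linarith [hu.1]

lemma log_two_div_le_log_pi_add_div {δ : ℝ} (hδ : 0 < δ) :
    Real.log (2 / δ) ≤ Real.log ((π + δ) / δ) := by
  gcongr
  linarith [pi_gt_three]

lemma log_pi_add_div_le_four_mul_log_two_div {δ : ℝ} (hδ₀ : 0 < δ) (hδ₁ : δ ≤ 1) :
    Real.log ((π + δ) / δ) ≤ 4 * Real.log (2 / δ) := by
  have hpow : (π + δ) / δ ≤ (2 / δ) ^ 4 := by
    rw [div_pow, div_le_div_iff₀ hδ₀ (by positivity)]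
    have hδ4 : δ ^ 4 ≤ δ := pow_le_of_le_one hδ₀.le hδ₁ (by norm_num)
    nlinarith [pi_lt_d2, pow_pos hδ₀ 4]
  calc Real.log ((π + δ) / δ) ≤ Real.log ((2 / δ) ^ 4) := log_le_log (by positivity) hpow
    _ = 4 * Real.log (2 / δ) := by rw [log_pow]; norm_num

lemma log_two_div_le_integral_circleInvDist {r : ℝ} (hr₀ : 0 ≤ r) (hr₁ : r < 1) :
    Real.log (2 / (1 - r)) ≤ ∫ u in (0 : ℝ)..π, circleInvDist r u := by
  have hδ : 0 < 1 - r := by linarith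
  have hz : ‖(r : ℂ)‖ < 1 := by rwa [norm_real, Real.norm_of_nonneg hr₀]
  calc Real.log (2 / (1 - r)) ≤ Real.log ((π + (1 - r)) / (1 - r)) :=
        log_two_div_le_log_pi_add_div hδ
    _ = ∫ u in (0 : ℝ)..π, (1 - r + u)⁻¹ := (integral_inv_const_add hδ pi_pos.le).symm
    _ ≤ ∫ u in (0 : ℝ)..π, circleInvDist r u := by
      refine intervalIntegral.integral_mono_on pi_pos.le
        (intervalIntegrable_inv_const_add hδ pi_pos.le)
        ((continuous_circleInvDist hz).intervalIntegrable _ _) fun u hu => ?_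
      exact inv_anti₀ (norm_sub_exp_mul_I_pos hz u)
        (norm_ofReal_sub_exp_mul_I_le hr₀ hr₁.le hu.1)

lemma integral_circleInvDist_le {r : ℝ} (hr₀ : 0 ≤ r) (hr₁ : r < 1) :
    ∫ u in (0 : ℝ)..π, circleInvDist r u ≤ 36 * Real.log (2 / (1 - r)) := by
  have hδ : 0 < 1 - r := by linarith
  have hz : ‖(r : ℂ)‖ < 1 := by rwa [norm_real, Real.norm_of_nonneg hr₀]
  calc ∫ u in (0 : ℝ)..π, circleInvDist r u ≤ ∫ u in (0 : ℝ)..π, 9 * (1 - r + u)⁻¹ := by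
        refine intervalIntegral.integral_mono_on pi_pos.le
          ((continuous_circleInvDist hz).intervalIntegrable _ _)
          ((intervalIntegrable_inv_const_add hδ pi_pos.le).const_mul 9) fun u hu => ?_
        calc circleInvDist r u ≤ ((1 - r + u) / 9)⁻¹ :=
              inv_anti₀ (by linarith [hu.1]) (le_norm_ofReal_sub_exp_mul_I hr₀ hu.1 hu.2)
          _ = 9 * (1 - r + u)⁻¹ := by rw [inv_div, div_eq_mul_inv]
    _ = 9 * Real.log ((π + (1 - r)) / (1 - r)) := by
        rw [intervalIntegral.integral_const_mul, integral_inv_const_add hδ pi_pos.le]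
    _ ≤ 36 * Real.log (2 / (1 - r)) := by
        linarith [log_pi_add_div_le_four_mul_log_two_div hδ (by linarith)]

lemma poissonKer_rpow_one_half {z : ℂ} (hz : ‖z‖ < 1) (θ : ℝ) :
    poissonKer z θ ^ ((1 : ℝ) / 2) = √((1 - ‖z‖ ^ 2) / (2 * π)) * circleInvDist z θ := by
  have hnum : 0 ≤ (1 - ‖z‖ ^ 2) / (2 * π) := by
    have : ‖z‖ ^ 2 ≤ 1 := pow_le_one₀ (norm_nonneg z) hz.le
    exact div_nonneg (by linarith) (by positivity)
  have hker : poissonKer z θ = (1 - ‖z‖ ^ 2) / (2 * π) / ‖z - exp (θ * I)‖ ^ 2 := by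
    rw [poissonKer]; ring
  rw [hker, ← sqrt_eq_rpow, sqrt_div hnum, sqrt_sq (norm_nonneg _), div_eq_mul_inv,
    circleInvDist]

lemma sqrt_one_sub_div_three_le {r : ℝ} (hr₀ : 0 ≤ r) (hr₁ : r < 1) :
    √(1 - r) / 3 ≤ √((1 - r ^ 2) / (2 * π)) := by
  have h9 : (1 - r) / 9 ≤ (1 - r ^ 2) / (2 * π) := by
    rw [div_le_div_iff₀ (by norm_num) (by positivity)]
    nlinarith [pi_lt_d2, mul_nonneg hr₀ (sub_nonneg.mpr hr₁.le)]
  calc √(1 - r) / 3 = √((1 - r) / 9) := by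
        rw [sqrt_div' _ (by norm_num), show (9 : ℝ) = 3 ^ 2 by norm_num, sqrt_sq (by norm_num)]
    _ ≤ √((1 - r ^ 2) / (2 * π)) := sqrt_le_sqrt h9

lemma sqrt_le_sqrt_one_sub {r : ℝ} (hr : r < 1) :
    √((1 - r ^ 2) / (2 * π)) ≤ √(1 - r) := by
  refine sqrt_le_sqrt ((div_le_iff₀ (by positivity)).mpr ?_)
  nlinarith [pi_gt_three]

/-- The normalizing integral for the square root of the Poisson kernel satisfies
`P₀1(z) ≍ (1-|z|)^(1/2) log(2/(1-|z|))` (log base 2). -/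
theorem sqrt_poisson_normalization_asymptotics :
    ∃ c₁ c₂ : ℝ, 0 < c₁ ∧ 0 < c₂ ∧ ∀ z : ℂ, 0 < ‖z‖ → ‖z‖ < 1 →
      c₁ * (1 - ‖z‖) ^ ((1 : ℝ) / 2) * Real.logb 2 (2 / (1 - ‖z‖)) ≤
        (∫ θ in (-Real.pi)..Real.pi, (poissonKer z θ) ^ ((1 : ℝ) / 2)) ∧
      (∫ θ in (-Real.pi)..Real.pi, (poissonKer z θ) ^ ((1 : ℝ) / 2)) ≤
        c₂ * (1 - ‖z‖) ^ ((1 : ℝ) / 2) * Real.logb 2 (2 / (1 - ‖z‖)) := by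
  have hlog2 : 0 < Real.log 2 := log_pos one_lt_two
  refine ⟨Real.log 2 / 2, 72 * Real.log 2, by positivity, by positivity, fun z _ hz₁ => ?_⟩
  have hr₀ := norm_nonneg z
  have hL : 0 ≤ Real.log (2 / (1 - ‖z‖)) :=
    log_nonneg ((le_div_iff₀ (by linarith)).mpr (by linarith))
  have hK₁ := log_two_div_le_integral_circleInvDist hr₀ hz₁
  have hK₂ := integral_circleInvDist_le hr₀ hz₁
  have hS₁ := sqrt_one_sub_div_three_le hr₀ hz₁
  have hS₂ := sqrt_le_sqrt_one_sub hz₁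
  have hintegral : ∫ θ in (-π)..π, poissonKer z θ ^ ((1 : ℝ) / 2)
      = √((1 - ‖z‖ ^ 2) / (2 * π)) * (2 * ∫ u in (0 : ℝ)..π, circleInvDist ‖z‖ u) := by
    simp_rw [poissonKer_rpow_one_half hz₁]
    rw [intervalIntegral.integral_const_mul,
      integral_circleInvDist_eq_integral_circleInvDist_norm,
      integral_circleInvDist_ofReal_eq_two_mul hr₀ hz₁]
  have hc₁ : Real.log 2 / 2 * √(1 - ‖z‖) * Real.logb 2 (2 / (1 - ‖z‖))
      = √(1 - ‖z‖) * Real.log (2 / (1 - ‖z‖)) / 2 := by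
    rw [Real.logb]; field_simp
  have hc₂ : 72 * Real.log 2 * √(1 - ‖z‖) * Real.logb 2 (2 / (1 - ‖z‖))
      = 72 * √(1 - ‖z‖) * Real.log (2 / (1 - ‖z‖)) := by
    rw [Real.logb]; field_simp
  rw [hintegral, ← sqrt_eq_rpow, hc₁, hc₂]
  constructor
  · nlinarith [sqrt_nonneg (1 - ‖z‖), mul_le_mul hS₁ hK₁ hL (sqrt_nonneg _)]
  · nlinarith [sqrt_nonneg (1 - ‖z‖), mul_le_mul hS₂ hK₂ (by linarith) (sqrt_nonneg _)]
end
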